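/- Let c_F, c_{FL}, ρ, ς², ς̂² > 0, w_d ∈ (−1,1), a_F > 0, and set b_F = (ς² c_{FL} + ς̂² c_F ρ)/(c_{FL} + c_F ρ). Then the function f_{F,∞}(w) = (a_F/(1−w²)²) · exp( −(2/b_F) ∫₀^w (z−w_d)/(1−z²)² dz ), defined for w ∈ (−1,1), satisfies the stationary Fokker–Planck equation (1/c_F + ρ/c_{FL})(w_d − w) f_{F,∞}(w) = (1/2)(ς²/c_F + ς̂² ρ/c_{FL}) · d/dw [ (1−w²)² f_{F,∞}(w) ] for all w ∈ (−1,1). -/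

import Mathlib

/-!
Multiplying the profile by the diffusion weight `(1 - w²)²` leaves `a · exp(-(2/b) Φ(w))`,
where `Φ` is a primitive of `(z - w_d)/(1 - z²)²`. Its derivative is therefore
`(2/b)(w_d - w) f(w)`, so the stationary equation reduces to the identity
`(1/c_F + ρ/c_FL) = ½ (ς²/c_F + ς̂²ρ/c_FL) · 2/b_F`, which is the definition of `b_F`.
-/

open Set MeasureTheory intervalIntegral

/-- Explicit steady state of the followers' (and, with other parameters,
leaders') Fokker-Planck equation. -/
noncomputable def steadyState (a bcoef wd : ℝ) (w : ℝ) : ℝ :=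
  a/(1 - w^2)^2 * Real.exp (-(2/bcoef) * ∫ z in (0:ℝ)..w, (z - wd)/(1 - z^2)^2)

theorem hasDerivAt_integral_of_continuousOn {E : Type*} [NormedAddCommGroup E]
    [NormedSpace ℝ E] [CompleteSpace E] {f : ℝ → E} {s : Set ℝ} {a b : ℝ}
    (hs : IsOpen s) (hs' : s.OrdConnected) (hf : ContinuousOn f s) (ha : a ∈ s) (hb : b ∈ s) :
    HasDerivAt (fun u => ∫ x in a..u, f x) (f b) b :=
  integral_hasDerivAt_right ((hf.mono (hs'.uIcc_subset ha hb)).intervalIntegrable)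
    (hf.stronglyMeasurableAtFilter hs b hb) (hf.continuousAt (hs.mem_nhds hb))

theorem one_sub_sq_pos_of_mem_Ioo {x : ℝ} (hx : x ∈ Ioo (-1 : ℝ) 1) : 0 < 1 - x ^ 2 :=
  sub_pos.2 ((sq_lt_one_iff_abs_lt_one x).2 (abs_lt.2 hx))

theorem one_sub_sq_sq_mul_steadyState {a b wd x : ℝ} (hx : x ∈ Ioo (-1 : ℝ) 1) :
    (1 - x ^ 2) ^ 2 * steadyState a b wd x
      = a * Real.exp (-(2 / b) * ∫ z in (0 : ℝ)..x, (z - wd) / (1 - z ^ 2) ^ 2) := by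
  have := (one_sub_sq_pos_of_mem_Ioo hx).ne'
  unfold steadyState
  field_simp

theorem hasDerivAt_one_sub_sq_sq_mul_steadyState (a b wd : ℝ) {w : ℝ}
    (hw : w ∈ Ioo (-1 : ℝ) 1) :
    HasDerivAt (fun x => (1 - x ^ 2) ^ 2 * steadyState a b wd x)
      (2 / b * (wd - w) * steadyState a b wd w) w := by
  have hcont : ContinuousOn (fun z : ℝ => (z - wd) / (1 - z ^ 2) ^ 2) (Ioo (-1) 1) :=
    ContinuousOn.div (by fun_prop) (by fun_prop)
      fun z hz => pow_ne_zero 2 (one_sub_sq_pos_of_mem_Ioo hz).ne'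
  have hprimitive := hasDerivAt_integral_of_continuousOn isOpen_Ioo ordConnected_Ioo hcont
    (by norm_num : (0 : ℝ) ∈ Ioo (-1) 1) hw
  have hweighted : (fun x => (1 - x ^ 2) ^ 2 * steadyState a b wd x)
      =ᶠ[nhds w] fun x =>
        a * Real.exp (-(2 / b) * ∫ z in (0 : ℝ)..x, (z - wd) / (1 - z ^ 2) ^ 2) := by
    filter_upwards [isOpen_Ioo.mem_nhds hw] with x hx
    exact one_sub_sq_sq_mul_steadyState hx
  refine (((hprimitive.const_mul (-(2 / b))).exp.const_mul a).congr_of_eventuallyEq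
    hweighted).congr_deriv ?_
  have := (one_sub_sq_pos_of_mem_Ioo hw).ne'
  unfold steadyState
  field_simp
  ring

theorem followers_steady_state_general
    (cF cFL ρ ς2 ςh2 : ℝ) (hcF : 0 < cF) (hcFL : 0 < cFL) (hρ : 0 < ρ)
    (hς2 : 0 < ς2) (hςh2 : 0 < ςh2)
    (wd : ℝ)
    (aF : ℝ)
    (bF : ℝ) (hbF : bF = (ς2*cFL + ςh2*cF*ρ)/(cFL + cF*ρ)) :
    ∀ w ∈ Ioo (-1:ℝ) 1,
      DifferentiableAt ℝ (fun x => (1 - x^2)^2 * steadyState aF bF wd x) w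
      ∧ (1/cF + ρ/cFL)*(wd - w)*(steadyState aF bF wd w)
        = (1/2)*(ς2/cF + ςh2*ρ/cFL)
          * deriv (fun x => (1 - x^2)^2 * steadyState aF bF wd x) w := by
  intro w hw
  have hderiv := hasDerivAt_one_sub_sq_sq_mul_steadyState aF bF wd hw
  have hcoeff : 1 / cF + ρ / cFL = 1 / 2 * (ς2 / cF + ςh2 * ρ / cFL) * (2 / bF) := by
    have : ς2 * cFL + ςh2 * cF * ρ ≠ 0 := by positivity
    rw [hbF]
    field_simp
  refine ⟨hderiv.differentiableAt, ?_⟩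
  rw [hderiv.deriv, hcoeff]
  ring

/-- the explicit profile `f_{F,∞}` solves the stationary
Fokker-Planck equation of the followers on `(-1,1)`. -/
theorem followers_steady_state
    (cF cFL ρ ς2 ςh2 : ℝ) (hcF : 0 < cF) (hcFL : 0 < cFL) (hρ : 0 < ρ)
    (hς2 : 0 < ς2) (hςh2 : 0 < ςh2)
    (wd : ℝ) (hwd : wd ∈ Ioo (-1:ℝ) 1)
    (aF : ℝ) (haF : 0 < aF)
    (bF : ℝ) (hbF : bF = (ς2*cFL + ςh2*cF*ρ)/(cFL + cF*ρ)) :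
    ∀ w ∈ Ioo (-1:ℝ) 1,
      DifferentiableAt ℝ (fun x => (1 - x^2)^2 * steadyState aF bF wd x) w
      ∧ (1/cF + ρ/cFL)*(wd - w)*(steadyState aF bF wd w)
        = (1/2)*(ς2/cF + ςh2*ρ/cFL)
          * deriv (fun x => (1 - x^2)^2 * steadyState aF bF wd x) w :=
  followers_steady_state_general cF cFL ρ ς2 ςh2 hcF hcFL hρ hς2 hςh2 wd aF bF hbF
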